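/- Let 0 < s ≤ 1/2 and 1/2 ≤ t ≤ 1−s. Then there is a constant c_s such that for every cube Q ⊂ ℝⁿ and every locally integrable function f, (1/|Q|)∫_Q |f(y) − m_f(t,Q)| dy ≤ c_s · inf_{y ∈ Q} M♯f(y). -/

import Mathlib

open MeasureTheory ENNReal

namespace LocalMedian

/-- Euclidean space `ℝⁿ`. -/
abbrev Sp (n : ℕ) := EuclideanSpace ℝ (Fin n)

/-- An axis-parallel cube in `ℝⁿ`, given by its lower corner and (positive) sidelength. -/
structure Cube (n : ℕ) where
  corner : Sp n
  side : ℝ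
  side_pos : 0 < side

namespace Cube

variable {n : ℕ}

/-- The set of points of the cube. -/
def set (Q : Cube n) : Set (Sp n) :=
  {x | ∀ i, Q.corner i ≤ x i ∧ x i ≤ Q.corner i + Q.side}

/-- The center of the cube. -/
noncomputable def center (Q : Cube n) : Sp n := WithLp.toLp 2 (fun i => Q.corner i + Q.side / 2)

/-- The cube concentric with `Q` whose sidelength is `r` times that of `Q`. -/
noncomputable def dilate (Q : Cube n) (r : ℝ) (hr : 0 < r) : Cube n where
  corner := WithLp.toLp 2 (fun i => Q.center i - r * Q.side / 2)
  side := r * Q.side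
  side_pos := mul_pos hr Q.side_pos

/-- `Q` is a dyadic subcube of `Q₀`, i.e. obtained from `Q₀` by repeated dyadic
subdivision into `2ⁿ` congruent subcubes. -/
def dyadicSub (Q₀ Q : Cube n) : Prop :=
  ∃ (k : ℕ) (m : Fin n → ℕ), (∀ i, m i < 2 ^ k) ∧
    Q.side = Q₀.side / 2 ^ k ∧ ∀ i, Q.corner i = Q₀.corner i + Q.side * m i

/-- `Q` is one of the `2ⁿ` dyadic children of `P` (so `P` is the dyadic parent of `Q`). -/
def isDyadicChild (Q P : Cube n) : Prop :=
  Q.side = P.side / 2 ∧ ∃ m : Fin n → ℕ, (∀ i, m i < 2) ∧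
    ∀ i, Q.corner i = P.corner i + Q.side * m i

end Cube

variable {n : ℕ}

/-- The (maximal) median of `f` over the cube `Q` with parameter `t`:
`m_f(t,Q) = sup { M : |{y ∈ Q : f y < M}| ≤ t|Q| }`. -/
noncomputable def median (f : Sp n → ℝ) (t : ℝ) (Q : Cube n) : ℝ :=
  sSup {M : ℝ | volume {y ∈ Q.set | f y < M} ≤ ENNReal.ofReal t * volume Q.set}

/-- The local oscillation `inf_c inf {α ≥ 0 : |{y ∈ Q : |f y - c| > α}| < s|Q|}`. -/
noncomputable def osc (f : Sp n → ℝ) (s : ℝ) (Q : Cube n) : ℝ :=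
  ⨅ c : ℝ, sInf {α : ℝ | 0 ≤ α ∧
    volume {y ∈ Q.set | α < |f y - c|} < ENNReal.ofReal s * volume Q.set}

/-- The local sharp maximal function `M♯_{0,s,Q₀} f`, restricted to the cube `Q₀`. -/
noncomputable def sharpLoc (f : Sp n → ℝ) (s : ℝ) (Q₀ : Cube n) (x : Sp n) : ℝ≥0∞ :=
  ⨆ Q : {Q : Cube n // x ∈ Q.set ∧ Q.set ⊆ Q₀.set}, ENNReal.ofReal (osc f s Q.1)

/-- The local sharp maximal function `M♯_{0,s} f` (over all cubes containing `x`). -/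
noncomputable def sharp (f : Sp n → ℝ) (s : ℝ) (x : Sp n) : ℝ≥0∞ :=
  ⨆ Q : {Q : Cube n // x ∈ Q.set}, ENNReal.ofReal (osc f s Q.1)

/-- The Hardy–Littlewood maximal function (over cubes containing `x`). -/
noncomputable def maximal (f : Sp n → ℝ) (x : Sp n) : ℝ≥0∞ :=
  ⨆ Q : {Q : Cube n // x ∈ Q.set},
    (∫⁻ y in Q.1.set, ENNReal.ofReal |f y|) / volume Q.1.set

/-- The Hardy–Littlewood maximal function of an `ℝ≥0∞`-valued function. -/
noncomputable def maximalE (g : Sp n → ℝ≥0∞) (x : Sp n) : ℝ≥0∞ :=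
  ⨆ Q : {Q : Cube n // x ∈ Q.set}, (∫⁻ y in Q.1.set, g y) / volume Q.1.set

/-- The average `(1/|Q|) ∫_Q g`. -/
noncomputable def cubeAvg (g : Sp n → ℝ) (Q : Cube n) : ℝ :=
  (volume Q.set).toReal⁻¹ * ∫ y in Q.set, g y

/-- The Fefferman–Stein sharp maximal function
`M♯ g(x) = sup_{Q ∋ x} (1/|Q|) ∫_Q |g - g_Q|`. -/
noncomputable def fsSharp (g : Sp n → ℝ) (x : Sp n) : ℝ≥0∞ :=
  ⨆ Q : {Q : Cube n // x ∈ Q.set},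
    ENNReal.ofReal (cubeAvg (fun y => |g y - cubeAvg g Q.1|) Q.1)

/-!
Let `m = m_f(t,Q)`. As `s ≤ 1 - t ≤ 1/2 ≤ t`, both `{f ≥ m}` and `{f ≤ m}` have measure at least
`s|Q|`, so Chebyshev's inequality on the side of `m` away from a constant `c` gives
`|m - c| s|Q| ≤ ∫_Q |f - c|`. By the triangle inequality `∫_Q |f - m| ≤ (1 + s⁻¹) ∫_Q |f - c|`,
and for `c = f_Q` the right-hand side is `(1 + s⁻¹)|Q|` times a term of the supremum defining
`M♯f(y)` for every `y ∈ Q`.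
-/

namespace Cube

lemma set_eq_preimage (Q : Cube n) :
    Q.set = (MeasurableEquiv.toLp 2 (Fin n → ℝ)).symm ⁻¹'
      (Set.univ.pi fun i => Set.Icc (Q.corner i) (Q.corner i + Q.side)) := by
  ext x
  simp only [Cube.set, Set.mem_preimage, Set.mem_pi, Set.mem_univ, forall_true_left,
    Set.mem_Icc, Set.mem_ofPred_eq]
  rfl

lemma volume_set (Q : Cube n) : volume Q.set = ENNReal.ofReal Q.side ^ n := by
  rw [set_eq_preimage,
    (EuclideanSpace.volume_preserving_symm_measurableEquiv_toLp (Fin n)).measure_preimage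
      (MeasurableSet.univ_pi fun _ => measurableSet_Icc).nullMeasurableSet,
    volume_pi_pi]
  simp [Real.volume_Icc]

lemma volume_set_ne_zero (Q : Cube n) : volume Q.set ≠ 0 := by
  rw [volume_set]
  exact pow_ne_zero _ (ENNReal.ofReal_pos.mpr Q.side_pos).ne'

lemma isCompact_set (Q : Cube n) : IsCompact Q.set := by
  rw [set_eq_preimage]
  exact (EuclideanSpace.equiv (Fin n) ℝ).toHomeomorph.isCompact_preimage.mpr
    (isCompact_univ_pi fun _ => isCompact_Icc)

lemma measurableSet_set (Q : Cube n) : MeasurableSet Q.set :=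
  Q.isCompact_set.isClosed.measurableSet

lemma volume_set_ne_top (Q : Cube n) : volume Q.set ≠ ∞ :=
  Q.isCompact_set.measure_ne_top

end Cube

section MeasureMedian

open Set Filter Topology

lemma monotone_setOf_lt {α : Type*} (f : α → ℝ) : Monotone fun M : ℝ => {y | f y < M} :=
  fun _ _ h _ hy => lt_of_lt_of_le hy h

variable {α : Type*} [MeasurableSpace α] {μ : Measure α} {f : α → ℝ} {t : ℝ}

noncomputable def measureMedian (μ : Measure α) (f : α → ℝ) (t : ℝ) : ℝ :=
  sSup {M : ℝ | μ {y | f y < M} ≤ ENNReal.ofReal t * μ univ}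

variable [IsFiniteMeasure μ]

lemma nonempty_measureMedian_set (hf : AEMeasurable f μ) (hμ : μ ≠ 0) (ht : 0 < t) :
    {M : ℝ | μ {y | f y < M} ≤ ENNReal.ofReal t * μ univ}.Nonempty := by
  have hempty : ⋂ M : ℝ, {y | f y < M} = ∅ :=
    eq_empty_of_forall_notMem fun y hy => lt_irrefl (f y) (mem_iInter.mp hy (f y))
  have hlim := tendsto_measure_iInter_atBot (μ := μ)
    (fun _ => nullMeasurableSet_lt hf aemeasurable_const) (monotone_setOf_lt f)
    ⟨0, measure_ne_top μ _⟩
  rw [hempty, measure_empty] at hlim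
  have hpos : 0 < ENNReal.ofReal t * μ univ :=
    ENNReal.mul_pos (ENNReal.ofReal_pos.mpr ht).ne' (Measure.measure_univ_ne_zero.mpr hμ)
  obtain ⟨M, hM⟩ := (hlim.eventually_lt_const hpos).exists
  exact ⟨M, hM.le⟩

lemma bddAbove_measureMedian_set (hμ : μ ≠ 0) (ht : t < 1) :
    BddAbove {M : ℝ | μ {y | f y < M} ≤ ENNReal.ofReal t * μ univ} := by
  have hunion : ⋃ M : ℝ, {y | f y < M} = univ :=
    eq_univ_of_forall fun y => mem_iUnion.mpr (exists_gt (f y))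
  have hlim := tendsto_measure_iUnion_atTop (μ := μ) (monotone_setOf_lt f)
  rw [hunion] at hlim
  have hlt : ENNReal.ofReal t * μ univ < μ univ := by
    simpa using ENNReal.mul_lt_mul_left (Measure.measure_univ_ne_zero.mpr hμ)
      (measure_ne_top μ _) (ENNReal.ofReal_lt_one.mpr ht)
  obtain ⟨M₀, hM₀⟩ := (hlim.eventually_const_lt hlt).exists
  refine ⟨M₀, fun M hM => le_of_not_gt fun hM₀M => ?_⟩
  exact (hM₀.trans_le (measure_mono (monotone_setOf_lt f hM₀M.le))).not_ge hM

lemma measure_lt_measureMedian_le (hf : AEMeasurable f μ) (hμ : μ ≠ 0) (ht : 0 < t) :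
    μ {y | f y < measureMedian μ f t} ≤ ENNReal.ofReal t * μ univ := by
  set m := measureMedian μ f t
  obtain ⟨u, hu_mono, hu_lt, hu_lim⟩ := exists_seq_strictMono_tendsto m
  have hunion : {y | f y < m} = ⋃ k, {y | f y < u k} := by
    ext y
    simp only [mem_ofPred_eq, mem_iUnion]
    exact ⟨fun hy => (hu_lim.eventually_const_lt hy).exists,
      fun ⟨k, hk⟩ => hk.trans (hu_lt k)⟩
  rw [hunion, Monotone.measure_iUnion (s := fun k => {y | f y < u k})
    ((monotone_setOf_lt f).comp hu_mono.monotone)]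
  refine iSup_le fun k => ?_
  obtain ⟨M, hM, hkM⟩ := exists_lt_of_lt_csSup (nonempty_measureMedian_set hf hμ ht) (hu_lt k)
  exact (measure_mono (monotone_setOf_lt f hkM.le)).trans hM

lemma ofReal_one_sub_mul_le_measure_measureMedian_le (hf : AEMeasurable f μ) (hμ : μ ≠ 0)
    (ht0 : 0 < t) (ht1 : t ≤ 1) :
    ENNReal.ofReal (1 - t) * μ univ ≤ μ {y | measureMedian μ f t ≤ f y} := by
  set m := measureMedian μ f t
  have hcover : μ univ ≤ μ {y | f y < m} + μ {y | m ≤ f y} :=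
    (measure_mono fun y _ => lt_or_ge (f y) m).trans (measure_union_le _ _)
  have hsum : ENNReal.ofReal (1 - t) * μ univ + ENNReal.ofReal t * μ univ
      ≤ μ {y | m ≤ f y} + ENNReal.ofReal t * μ univ :=
    calc _ = μ univ := by
          rw [← add_mul, ← ENNReal.ofReal_add (by linarith) ht0.le, sub_add_cancel,
            ENNReal.ofReal_one, one_mul]
      _ ≤ _ := hcover.trans (by
          rw [add_comm]; gcongr; exact measure_lt_measureMedian_le hf hμ ht0)
  exact (ENNReal.add_le_add_iff_right (by finiteness)).mp hsum

lemma ofReal_mul_le_measure_le_measureMedian (hf : AEMeasurable f μ) (hμ : μ ≠ 0) (ht : t < 1) :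
    ENNReal.ofReal t * μ univ ≤ μ {y | f y ≤ measureMedian μ f t} := by
  set m := measureMedian μ f t
  obtain ⟨v, hv_anti, hv_gt, hv_lim⟩ := exists_seq_strictAnti_tendsto m
  have hinter : {y | f y ≤ m} = ⋂ k, {y | f y < v k} := by
    ext y
    simp only [mem_ofPred_eq, mem_iInter]
    exact ⟨fun hy k => hy.trans_lt (hv_gt k),
      fun hy => ge_of_tendsto hv_lim (Eventually.of_forall fun k => (hy k).le)⟩
  rw [hinter, Antitone.measure_iInter (s := fun k => {y | f y < v k})
    ((monotone_setOf_lt f).comp_antitone hv_anti.antitone)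
    (fun _ => nullMeasurableSet_lt hf aemeasurable_const) ⟨0, measure_ne_top μ _⟩]
  refine le_iInf fun k => le_of_not_ge fun hk => ?_
  exact (hv_gt k).not_ge (le_csSup (bddAbove_measureMedian_set hμ ht) hk)

end MeasureMedian

section MedianEstimate

open Set

variable {α : Type*} [MeasurableSpace α] {μ : Measure α} {f : α → ℝ}

/-- Chebyshev's inequality on the side of `m` away from `c`. -/
lemma ofReal_abs_sub_mul_le_lintegral (hf : AEMeasurable f μ) {m c : ℝ} {a : ℝ≥0∞}
    (h_ge : a ≤ μ {y | m ≤ f y}) (h_le : a ≤ μ {y | f y ≤ m}) :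
    ENNReal.ofReal |m - c| * a ≤ ∫⁻ y, ENNReal.ofReal |f y - c| ∂μ := by
  have hmeas : AEMeasurable (fun y => ENNReal.ofReal |f y - c|) μ :=
    (continuous_abs.measurable.comp_aemeasurable (hf.sub_const c)).ennreal_ofReal
  refine le_trans ?_ (mul_meas_ge_le_lintegral₀ hmeas (ENNReal.ofReal |m - c|))
  gcongr
  rcases le_total c m with hcm | hmc
  · refine h_ge.trans (measure_mono (ofPred_subset_ofPred.2 fun y hy => ?_))
    rw [abs_of_nonneg (sub_nonneg.2 hcm)]
    exact ENNReal.ofReal_le_ofReal ((sub_le_sub_right hy c).trans (le_abs_self _))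
  · refine h_le.trans (measure_mono (ofPred_subset_ofPred.2 fun y hy => ?_))
    rw [abs_of_nonpos (sub_nonpos.2 hmc), neg_sub, abs_sub_comm]
    exact ENNReal.ofReal_le_ofReal ((sub_le_sub_left hy c).trans (le_abs_self _))

variable [IsFiniteMeasure μ]

lemma lintegral_abs_sub_measureMedian_le (hf : AEMeasurable f μ) (hμ : μ ≠ 0) {s t : ℝ}
    (hs : 0 < s) (hst : s + t ≤ 1) (hts : s ≤ t) (c : ℝ) :
    ∫⁻ y, ENNReal.ofReal |f y - measureMedian μ f t| ∂μ
      ≤ ENNReal.ofReal (1 + s⁻¹) * ∫⁻ y, ENNReal.ofReal |f y - c| ∂μ := by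
  set m := measureMedian μ f t
  set L := ∫⁻ y, ENNReal.ofReal |f y - c| ∂μ
  have ht0 : 0 < t := hs.trans_le hts
  have ht1 : t < 1 := by linarith
  have h_ge : ENNReal.ofReal s * μ univ ≤ μ {y | m ≤ f y} :=
    (mul_le_mul_left (ENNReal.ofReal_le_ofReal (by linarith)) _).trans
      (ofReal_one_sub_mul_le_measure_measureMedian_le hf hμ ht0 ht1.le)
  have h_le : ENNReal.ofReal s * μ univ ≤ μ {y | f y ≤ m} :=
    (mul_le_mul_left (ENNReal.ofReal_le_ofReal hts) _).trans
      (ofReal_mul_le_measure_le_measureMedian hf hμ ht1)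
  have hcheb := ofReal_abs_sub_mul_le_lintegral (c := c) hf h_ge h_le
  have hconst : ENNReal.ofReal |m - c| * μ univ ≤ ENNReal.ofReal s⁻¹ * L :=
    calc _ = ENNReal.ofReal s⁻¹ * ENNReal.ofReal s * (ENNReal.ofReal |m - c| * μ univ) := by
          rw [← ENNReal.ofReal_mul (by positivity), inv_mul_cancel₀ hs.ne', ENNReal.ofReal_one,
            one_mul]
      _ = ENNReal.ofReal s⁻¹ * (ENNReal.ofReal |m - c| * (ENNReal.ofReal s * μ univ)) := by ring
      _ ≤ _ := by gcongr
  calc ∫⁻ y, ENNReal.ofReal |f y - m| ∂μ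
      ≤ ∫⁻ y, (ENNReal.ofReal |f y - c| + ENNReal.ofReal |m - c|) ∂μ := by
        refine lintegral_mono fun y => ?_
        rw [← ENNReal.ofReal_add (abs_nonneg _) (abs_nonneg _), abs_sub_comm m c]
        exact ENNReal.ofReal_le_ofReal (abs_sub_le _ _ _)
    _ = L + ENNReal.ofReal |m - c| * μ univ := by
        rw [lintegral_add_right _ measurable_const, lintegral_const]
    _ ≤ L + ENNReal.ofReal s⁻¹ * L := by gcongr
    _ = ENNReal.ofReal (1 + s⁻¹) * L := by
        rw [ENNReal.ofReal_add zero_le_one (by positivity), ENNReal.ofReal_one]; ring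

end MedianEstimate

section CubeAverages

lemma median_eq_measureMedian (f : Sp n → ℝ) (t : ℝ) (Q : Cube n) :
    median f t Q = measureMedian (volume.restrict Q.set) f t := by
  simp only [median, measureMedian, Measure.restrict_apply' Q.measurableSet_set,
    Set.inter_univ, Set.inter_comm _ Q.set, Set.inter_ofPred_eq_sep]

lemma ofReal_cubeAvg_of_nonneg {g : Sp n → ℝ} {Q : Cube n} (hg : IntegrableOn g Q.set)
    (hg0 : ∀ y, 0 ≤ g y) :
    ENNReal.ofReal (cubeAvg g Q) = (∫⁻ y in Q.set, ENNReal.ofReal (g y)) / volume Q.set := by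
  rw [cubeAvg, ← ofReal_integral_eq_lintegral_ofReal hg (Filter.Eventually.of_forall hg0),
    ENNReal.ofReal_mul (by positivity),
    ENNReal.ofReal_inv_of_pos (ENNReal.toReal_pos Q.volume_set_ne_zero Q.volume_set_ne_top),
    ENNReal.ofReal_toReal Q.volume_set_ne_top, ENNReal.div_eq_inv_mul]

lemma ofReal_cubeAvg_le_iInf_fsSharp (g : Sp n → ℝ) (Q : Cube n) :
    ENNReal.ofReal (cubeAvg (fun y => |g y - cubeAvg g Q|) Q) ≤ ⨅ y : Q.set, fsSharp g y :=
  le_iInf fun y => le_iSup_of_le ⟨Q, y.2⟩ le_rfl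

end CubeAverages

theorem statement8_general {n : ℕ} (s t : ℝ) (hs0 : 0 < s)
    (ht : 1 / 2 ≤ t) (ht1 : t ≤ 1 - s) :
    ∃ c : ℝ, 0 < c ∧
      ∀ (Q : Cube n) (f : Sp n → ℝ), LocallyIntegrable f volume →
        (∫⁻ y in Q.set, ENNReal.ofReal |f y - median f t Q|) / volume Q.set
          ≤ ENNReal.ofReal c * ⨅ y : Q.set, fsSharp f ↑y := by
  refine ⟨1 + s⁻¹, by positivity, fun Q f hf => ?_⟩
  have hfQ : IntegrableOn f Q.set := hf.integrableOn_isCompact Q.isCompact_set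
  have hμ : volume.restrict Q.set ≠ 0 := by
    simpa [Measure.restrict_eq_zero] using Q.volume_set_ne_zero
  have : IsFiniteMeasure (volume.restrict Q.set) :=
    isFiniteMeasure_restrict.mpr Q.volume_set_ne_top
  have hmedian := lintegral_abs_sub_measureMedian_le hfQ.aemeasurable hμ hs0
    (by linarith) (by linarith) (cubeAvg f Q)
  rw [← median_eq_measureMedian] at hmedian
  calc _ ≤ (ENNReal.ofReal (1 + s⁻¹) *
        ∫⁻ y in Q.set, ENNReal.ofReal |f y - cubeAvg f Q|) / volume Q.set := by gcongr
    _ = ENNReal.ofReal (1 + s⁻¹) *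
          ENNReal.ofReal (cubeAvg (fun y => |f y - cubeAvg f Q|) Q) := by
        rw [mul_div_assoc, ofReal_cubeAvg_of_nonneg (g := fun y => |f y - cubeAvg f Q|)
          (hfQ.sub (integrableOn_const Q.volume_set_ne_top)).abs fun _ => abs_nonneg _]
    _ ≤ _ := by gcongr; exact ofReal_cubeAvg_le_iInf_fsSharp f Q

/-- Let `0 < s ≤ 1/2` and `1/2 ≤ t ≤ 1 − s`. There is a constant
`c_s > 0` such that for every cube `Q ⊂ ℝⁿ` and every locally integrable `f`:
`(1/|Q|) ∫_Q |f(y) − m_f(t,Q)| dy ≤ c_s inf_{y ∈ Q} M♯f(y)`. -/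
theorem statement8 {n : ℕ} (s t : ℝ) (hs0 : 0 < s) (hs : s ≤ 1 / 2)
    (ht : 1 / 2 ≤ t) (ht1 : t ≤ 1 - s) :
    ∃ c : ℝ, 0 < c ∧
      ∀ (Q : Cube n) (f : Sp n → ℝ), LocallyIntegrable f volume →
        (∫⁻ y in Q.set, ENNReal.ofReal |f y - median f t Q|) / volume Q.set
          ≤ ENNReal.ofReal c * ⨅ y : Q.set, fsSharp f ↑y :=
  statement8_general s t hs0 ht ht1

end LocalMedian
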